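/- Let x, y, z be real numbers with 0 < z < x ≤ y and x + y < 2. Then arccos((x + y)/2) − arccos((y + z)/2) + (x − y)/√(4 − (x + y)²) + (y − z)/√(4 − (y + z)²) < 0. -/

import Mathlib

open Real Set

/-!
With `a = (x + y)/2` and `b = (y + z)/2` the expression is `φ a - φ b` for
`φ u = arccos u + (u - y)/√(1 - u²)`, whose derivative `u (u - y)/(1 - u²)^{3/2}` is negative
for `0 < u < min y 1`. Since `0 < b < a ≤ y` and `a < 1`, strict monotonicity gives `φ a < φ b`.
-/

noncomputable def arccosAddDivSqrt (c u : ℝ) : ℝ :=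
  arccos u + (u - c) / √(1 - u ^ 2)

lemma hasDerivAt_arccosAddDivSqrt (c : ℝ) {u : ℝ} (h₁ : -1 < u) (h₂ : u < 1) :
    HasDerivAt (arccosAddDivSqrt c) (u * (u - c) / √(1 - u ^ 2) ^ 3) u := by
  have hpos : 0 < 1 - u ^ 2 := by nlinarith
  have hs : 0 < √(1 - u ^ 2) := sqrt_pos.2 hpos
  have hsqrt : HasDerivAt (fun u : ℝ => √(1 - u ^ 2)) (1 / (2 * √(1 - u ^ 2)) * -(2 * u)) u :=
    (hasDerivAt_sqrt hpos.ne').comp u (by simpa using (hasDerivAt_pow 2 u).const_sub 1)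
  refine ((hasDerivAt_arccos h₁.ne' h₂.ne).add
    (((hasDerivAt_id u).sub_const c).div hsqrt hs.ne')).congr_deriv ?_
  field_simp
  simp only [id]
  ring

lemma strictAntiOn_arccosAddDivSqrt (c : ℝ) :
    StrictAntiOn (arccosAddDivSqrt c) (Icc 0 c ∩ Iio 1) := by
  have hderiv : ∀ u ∈ Icc 0 c ∩ Iio 1,
      HasDerivAt (arccosAddDivSqrt c) (u * (u - c) / √(1 - u ^ 2) ^ 3) u :=
    fun u hu => hasDerivAt_arccosAddDivSqrt c (by linarith [hu.1.1]) hu.2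
  refine strictAntiOn_of_deriv_neg ((convex_Icc 0 c).inter (convex_Iio 1))
    (fun u hu => (hderiv u hu).continuousAt.continuousWithinAt) fun u hu => ?_
  rw [interior_inter, interior_Icc, interior_Iio] at hu
  obtain ⟨⟨hu₀, huc⟩, hu₁ : u < 1⟩ := hu
  rw [(hderiv u ⟨⟨hu₀.le, huc.le⟩, hu₁⟩).deriv]
  have hs : 0 < √(1 - u ^ 2) := sqrt_pos.2 (by nlinarith)
  exact div_neg_of_neg_of_pos (mul_neg_of_pos_of_neg hu₀ (by linarith)) (by positivity)

lemma sqrt_four_sub_sq (t : ℝ) : √(4 - t ^ 2) = 2 * √(1 - (t / 2) ^ 2) := by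
  rw [show 4 - t ^ 2 = 2 ^ 2 * (1 - (t / 2) ^ 2) by ring, sqrt_mul (by norm_num),
    sqrt_sq (by norm_num)]

theorem deformation_derivative_neg (x y z : ℝ) (hz : 0 < z) (hzx : z < x)
    (hxy : x ≤ y) (hsum : x + y < 2) :
    Real.arccos ((x + y) / 2) - Real.arccos ((y + z) / 2)
      + (x - y) / Real.sqrt (4 - (x + y) ^ 2)
      + (y - z) / Real.sqrt (4 - (y + z) ^ 2) < 0 := by
  have hb : (y + z) / 2 ∈ Icc 0 y ∩ Iio 1 := ⟨⟨by linarith, by linarith⟩, mem_Iio.2 (by linarith)⟩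
  have ha : (x + y) / 2 ∈ Icc 0 y ∩ Iio 1 := ⟨⟨by linarith, by linarith⟩, mem_Iio.2 (by linarith)⟩
  have hmono := strictAntiOn_arccosAddDivSqrt y hb ha (by linarith)
  have hx : x - y = 2 * ((x + y) / 2 - y) := by ring
  have hz' : y - z = -(2 * ((y + z) / 2 - y)) := by ring
  rw [sqrt_four_sub_sq, sqrt_four_sub_sq, hx, hz', mul_div_mul_left _ _ two_ne_zero,
    neg_div, mul_div_mul_left _ _ two_ne_zero]
  unfold arccosAddDivSqrt at hmono
  linarith
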